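/- For all positive integers a ≥ b and all real x ≥ 1, P̄ₐ(x)·P̄_b(x) > P̄_{a+b}(x), except for (a,b,x) ∈ {(1,1,1), (2,1,1)} where equality holds. -/

import Mathlib

/-- Divisor sum `σ(n) = ∑_{d ∣ n} d`. -/
def sigma1 (n : ℕ) : ℕ := ∑ d ∈ n.divisors, d

/-- `σ̄(n) = 2^(m+1) σ(l)` where `n = 2^m l` with `l` odd. -/
def sigmabar (n : ℕ) : ℕ :=
  2 ^ (n.factorization 2 + 1) * sigma1 (n / 2 ^ (n.factorization 2))

/-- Polynomials `P̄ₙ` with `P̄₀ = 1` and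
`P̄ₙ(x) = (x/n) ∑_{k=1}^n σ̄(k) P̄_{n-k}(x)`. -/
noncomputable def Pbar : ℕ → Polynomial ℝ
  | 0 => 1
  | (n + 1) =>
      Polynomial.C ((n + 1 : ℝ)⁻¹) * Polynomial.X *
        ∑ k ∈ Finset.range (n + 1), (sigmabar (k + 1) : ℝ) • Pbar (n - k)
decreasing_by exact Nat.lt_succ_of_le (Nat.sub_le n k)

/-!
Applying the recursion `n P̄ₙ = x ∑_{k=1}^{n} σ̄(k) P̄_{n-k}` to `n = a`, `b` and `a + b`, and
splitting the last sum at `k = a`, gives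

  `(a + b)(P̄ₐP̄_b - P̄_{a+b}) = x (∑_{k=1}^{a} σ̄(k)(P̄_{a-k}P̄_b - P̄_{a-k+b}) + R)`,
  `R = ∑_{j=1}^{b} (σ̄(j)P̄ₐ - σ̄(a+j))P̄_{b-j}`.

The first sum is nonnegative by induction on `a + b`. For `j ≤ b ≤ a` the terms of `R` are
nonnegative since `σ̄(a+j) ≤ (a+j)(a+j+1)`, `σ̄(j) ≥ 2j` and `P̄ₐ(x) ≥ (a+1)(a+2)(a+3)/18` for
`x ≥ 1` (small `a` by exact values); the term `j = 1` is positive unless `x = 1` and `a ≤ 2`,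
where only `(a, b) = (2, 2)` remains and the term `j = 2` is positive. The cubic bound is the case
`r = 3` of `P̄ₙ(x) ≥ 2^r/(r+1)! · C(n+r, r)`, proved by induction on `r` from `σ̄(k) ≥ 2k` and
`∑_{i+j=n} (i+1) C(r+j, r) = C(n+r+2, r+2)`.
-/

open Finset
open scoped Nat

theorem sigmabar_two_pow_mul {m l : ℕ} (hl : Odd l) :
    sigmabar (2 ^ m * l) = 2 ^ (m + 1) * sigma1 l := by
  have hl0 : l ≠ 0 := by rintro rfl; simp at hl
  have hval : (2 ^ m * l).factorization 2 = m := by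
    rw [Nat.factorization_mul (by positivity) hl0, Nat.prime_two.factorization_pow]
    simp [Nat.factorization_eq_zero_of_not_dvd hl.not_two_dvd_nat]
  rw [sigmabar, hval, Nat.mul_div_cancel_left _ (by positivity)]

theorem sigmabar_values :
    sigmabar 1 = 2 ∧ sigmabar 2 = 4 ∧ sigmabar 3 = 8 ∧ sigmabar 4 = 8 ∧ sigmabar 5 = 12 ∧
      sigmabar 6 = 16 ∧ sigmabar 7 = 16 ∧ sigmabar 8 = 16 ∧ sigmabar 9 = 26 ∧
      sigmabar 10 = 24 :=
  ⟨sigmabar_two_pow_mul (m := 0) (l := 1) (by decide),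
    sigmabar_two_pow_mul (m := 1) (l := 1) (by decide),
    sigmabar_two_pow_mul (m := 0) (l := 3) (by decide),
    sigmabar_two_pow_mul (m := 2) (l := 1) (by decide),
    sigmabar_two_pow_mul (m := 0) (l := 5) (by decide),
    sigmabar_two_pow_mul (m := 1) (l := 3) (by decide),
    sigmabar_two_pow_mul (m := 0) (l := 7) (by decide),
    sigmabar_two_pow_mul (m := 3) (l := 1) (by decide),
    sigmabar_two_pow_mul (m := 0) (l := 9) (by decide),
    sigmabar_two_pow_mul (m := 1) (l := 5) (by decide)⟩

theorem le_sigma1 {l : ℕ} (hl : l ≠ 0) : l ≤ sigma1 l :=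
  single_le_sum (f := id) (fun _ _ => Nat.zero_le _) (Nat.mem_divisors_self l hl)

theorem two_mul_sigma1_le (l : ℕ) : 2 * sigma1 l ≤ l * (l + 1) := by
  have hsub : sigma1 l ≤ ∑ d ∈ range (l + 1), d :=
    sum_le_sum_of_subset fun d hd => mem_range_succ_iff.2 (Nat.divisor_le hd)
  have hgauss := sum_range_id_mul_two (l + 1)
  simp only [Nat.add_sub_cancel] at hgauss
  linarith

theorem two_mul_le_sigmabar (n : ℕ) : 2 * n ≤ sigmabar n := by
  rcases eq_or_ne n 0 with rfl | hn
  · simp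
  obtain ⟨m, l, hl, rfl⟩ := Nat.exists_eq_two_pow_mul_odd hn
  rw [sigmabar_two_pow_mul hl, pow_succ]
  have := le_sigma1 hl.pos.ne'
  nlinarith [Nat.one_le_two_pow (n := m)]

theorem sigmabar_le (n : ℕ) : sigmabar n ≤ n * (n + 1) := by
  rcases eq_or_ne n 0 with rfl | hn
  · simp [sigmabar, sigma1]
  obtain ⟨m, l, hl, rfl⟩ := Nat.exists_eq_two_pow_mul_odd hn
  rw [sigmabar_two_pow_mul hl, pow_succ]
  have h1 := two_mul_sigma1_le l
  have h2 : l ≤ 2 ^ m * l := Nat.le_mul_of_pos_left l (by positivity)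
  calc 2 ^ m * 2 * sigma1 l ≤ 2 ^ m * (l * (l + 1)) := by
        rw [mul_assoc]; exact Nat.mul_le_mul_left _ h1
    _ = 2 ^ m * l * (l + 1) := by ring
    _ ≤ 2 ^ m * l * (2 ^ m * l + 1) := by gcongr

theorem Pbar_zero : Pbar 0 = 1 := by
  rw [Pbar]

theorem natCast_mul_eval_Pbar (n : ℕ) (x : ℝ) :
    n * (Pbar n).eval x =
      x * ∑ k ∈ range n, (sigmabar (k + 1) : ℝ) * (Pbar (n - 1 - k)).eval x := by
  rcases n with _ | n
  · simp
  rw [Pbar]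
  simp only [Polynomial.eval_mul, Polynomial.eval_C, Polynomial.eval_X,
    Polynomial.eval_finsetSum, Polynomial.eval_smul, smul_eq_mul, Nat.add_sub_cancel]
  push_cast
  field_simp

theorem eval_Pbar_nonneg (n : ℕ) {x : ℝ} (hx : 0 ≤ x) : 0 ≤ (Pbar n).eval x := by
  induction n using Nat.strong_induction_on with
  | _ n ih =>
    rcases n with _ | n
    · simp [Pbar_zero]
    have hrec := natCast_mul_eval_Pbar (n + 1) x
    refine nonneg_of_mul_nonneg_right (hrec ▸ ?_) (by positivity : (0 : ℝ) < (n + 1 : ℕ))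
    exact mul_nonneg hx <| sum_nonneg fun k hk => mul_nonneg (by positivity) (ih _ (by omega))

theorem one_le_eval_Pbar (n : ℕ) {x : ℝ} (hx : 1 ≤ x) : 1 ≤ (Pbar n).eval x := by
  rcases n with _ | n
  · simp [Pbar_zero]
  have hrec := natCast_mul_eval_Pbar (n + 1) x
  have hlast : (sigmabar (n + 1) : ℝ) ≤
      ∑ k ∈ range (n + 1), (sigmabar (k + 1) : ℝ) * (Pbar (n - k)).eval x := by
    refine le_of_eq_of_le ?_ (single_le_sum (fun k _ => mul_nonneg (by positivity)
      (eval_Pbar_nonneg _ (by linarith))) (self_mem_range_succ n))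
    simp [Pbar_zero]
  have hσ : (2 * (n + 1) : ℝ) ≤ sigmabar (n + 1) := by
    exact_mod_cast two_mul_le_sigmabar (n + 1)
  push_cast at hrec
  nlinarith

theorem eval_Pbar_one (x : ℝ) : (Pbar 1).eval x = 2 * x := by
  simpa [sigmabar_values, Pbar_zero, mul_comm] using natCast_mul_eval_Pbar 1 x

theorem eval_Pbar_two (x : ℝ) : (Pbar 2).eval x = 2 * x ^ 2 + 2 * x := by
  have h := natCast_mul_eval_Pbar 2 x
  simp [sum_range_succ, sigmabar_values, eval_Pbar_one, Pbar_zero] at h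
  linarith

theorem eval_one_Pbar_three : (Pbar 3).eval 1 = 8 := by
  have h := natCast_mul_eval_Pbar 3 1
  norm_num [sum_range_succ, sigmabar_values, eval_Pbar_one, eval_Pbar_two, Pbar_zero] at h
  linarith

theorem sum_antidiagonal_succ_mul_choose_add (r n : ℕ) :
    ∑ ij ∈ antidiagonal n, (ij.1 + 1) * (r + ij.2).choose r = (r + n + 2).choose (r + 2) := by
  induction n with
  | zero => simp
  | succ n ih =>
    rw [Finset.Nat.sum_antidiagonal_succ]
    simp only [add_mul (_ + 1) 1, one_mul, sum_add_distrib, ih, sum_antidiagonal_choose_add]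
    rw [show r + (n + 1) + 2 = r + n + 2 + 1 by ring, Nat.choose_succ_succ' (r + n + 2) (r + 1),
      show r + n + 2 = r + n + 1 + 1 by ring, Nat.choose_succ_succ' (r + n + 1) r]
    ring_nf

theorem sum_antidiagonal_le_mul_eval_Pbar {x : ℝ} (hx : 1 ≤ x) (g : ℕ → ℝ) (n : ℕ)
    (hg : ∀ m ≤ n, g m ≤ (Pbar m).eval x) :
    ∑ ij ∈ antidiagonal n, 2 * (ij.1 + 1 : ℝ) * g ij.2 ≤ (n + 1) * (Pbar (n + 1)).eval x := by
  have hrec := natCast_mul_eval_Pbar (n + 1) x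
  simp only [Nat.add_sub_cancel] at hrec
  rw [← Finset.Nat.sum_antidiagonal_eq_sum_range_succ
    (fun i j => (sigmabar (i + 1) : ℝ) * (Pbar j).eval x)] at hrec
  push_cast at hrec
  rw [hrec]
  have hsum : 0 ≤ ∑ ij ∈ antidiagonal n, (sigmabar (ij.1 + 1) : ℝ) * (Pbar ij.2).eval x :=
    sum_nonneg fun _ _ => mul_nonneg (by positivity) (eval_Pbar_nonneg _ (by linarith))
  refine (sum_le_sum fun ij hij => ?_).trans (le_mul_of_one_le_left hsum hx)
  have hσ : (2 * (ij.1 + 1) : ℝ) ≤ sigmabar (ij.1 + 1) := by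
    exact_mod_cast two_mul_le_sigmabar (ij.1 + 1)
  exact (mul_le_mul_of_nonneg_left (hg _ (HasAntidiagonal.antidiagonal.snd_le hij))
    (by positivity)).trans (mul_le_mul_of_nonneg_right hσ (eval_Pbar_nonneg _ (by linarith)))

theorem two_pow_div_factorial_mul_choose_le_eval_Pbar (r n : ℕ) {x : ℝ} (hx : 1 ≤ x) :
    (2 : ℝ) ^ r / (r + 1)! * (r + n).choose r ≤ (Pbar n).eval x := by
  induction r generalizing n with
  | zero => simpa using one_le_eval_Pbar n hx
  | succ r ih =>
    have hfac : ((r + 1 + 1)! : ℝ) = (r + 2) * (r + 1)! := by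
      push_cast [Nat.factorial_succ]; ring
    have hcoeff : (2 : ℝ) ^ (r + 1) / (r + 1 + 1)! * (r + 2) = 2 * (2 ^ r / (r + 1)!) := by
      rw [hfac]; field_simp; ring
    rcases n with _ | n
    · have h0 := ih 0
      simp only [add_zero, Nat.choose_self, Nat.cast_one, mul_one, Pbar_zero,
        Polynomial.eval_one] at h0 ⊢
      nlinarith [(by positivity : (0 : ℝ) < 2 ^ (r + 1) / (r + 1 + 1)!)]
    have hstep := sum_antidiagonal_le_mul_eval_Pbar hx _ n fun m _ => ih m
    have hid := congrArg (Nat.cast : ℕ → ℝ) (sum_antidiagonal_succ_mul_choose_add r n)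
    have hch := Nat.choose_succ_right_eq (r + n + 2) (r + 1)
    rw [show r + n + 2 - (r + 1) = n + 1 by omega] at hch
    have hch' :
        ((r + n + 2).choose (r + 2) : ℝ) * (r + 2) = (r + n + 2).choose (r + 1) * (n + 1) := by
      exact_mod_cast hch
    push_cast at hid
    have hsum :
        ∑ ij ∈ antidiagonal n, 2 * (ij.1 + 1 : ℝ) * (2 ^ r / (r + 1)! * (r + ij.2).choose r) =
          2 * (2 ^ r / (r + 1)!) * (r + n + 2).choose (r + 2) := by
      rw [← hid, mul_sum]
      exact sum_congr rfl fun _ _ => by ring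
    rw [hsum] at hstep
    rw [← mul_le_mul_iff_of_pos_left (by positivity : (0 : ℝ) < n + 1)]
    refine le_of_eq_of_le ?_ hstep
    rw [show r + 1 + (n + 1) = r + n + 2 by ring]
    linear_combination (-(2 : ℝ) ^ (r + 1) / (r + 1 + 1)!) * hch' +
      ((r + n + 2).choose (r + 2) : ℝ) * hcoeff

theorem cubic_le_eval_Pbar (n : ℕ) {x : ℝ} (hx : 1 ≤ x) :
    ((n : ℝ) + 1) * (n + 2) * (n + 3) / 18 ≤ (Pbar n).eval x := by
  have hchoose : ((3 + n).choose 3 : ℝ) = (n + 1) * (n + 2) * (n + 3) / 6 := by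
    rw [Nat.cast_add_choose, show 3 + n = n + 1 + 1 + 1 by ring]
    push_cast [Nat.factorial_succ]
    field_simp
    ring
  have h := two_pow_div_factorial_mul_choose_le_eval_Pbar 3 n hx
  rw [hchoose] at h
  norm_num [Nat.factorial] at h
  linarith

theorem sigmabar_add_le_mul_eval_Pbar {a j : ℕ} (hj : 1 ≤ j) (hja : j ≤ a) {x : ℝ}
    (hx : 1 ≤ x) : (sigmabar (a + j) : ℝ) ≤ sigmabar j * (Pbar a).eval x := by
  have hcubic := cubic_le_eval_Pbar a hx
  by_cases hsmall : a ≤ 5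
  · interval_cases a <;> interval_cases j <;>
      norm_num [sigmabar_values, eval_Pbar_one, eval_Pbar_two] at hcubic ⊢ <;> nlinarith
  have hσ : (sigmabar (a + j) : ℝ) ≤ (a + j) * (a + j + 1) := by
    exact_mod_cast sigmabar_le (a + j)
  have hσj : (2 * j : ℝ) ≤ sigmabar j := by exact_mod_cast two_mul_le_sigmabar j
  have hj' : (1 : ℝ) ≤ j := by exact_mod_cast hj
  have hja' : (j : ℝ) ≤ a := by exact_mod_cast hja
  have ha' : (6 : ℝ) ≤ a := by exact_mod_cast (by omega : 6 ≤ a)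
  calc (sigmabar (a + j) : ℝ) ≤ (a + j) * (a + j + 1) := hσ
    _ ≤ 2 * j * (((a : ℝ) + 1) * (a + 2) * (a + 3) / 18) := by
      nlinarith [mul_nonneg (sub_nonneg.2 hj') (by nlinarith : (0 : ℝ) ≤ a ^ 2 + a - j)]
    _ ≤ sigmabar j * (Pbar a).eval x :=
      mul_le_mul hσj hcubic (by positivity) (by positivity)

theorem sigmabar_add_one_lt_mul_eval_Pbar {a : ℕ} (ha : 1 ≤ a) {x : ℝ} (hx : 1 ≤ x)
    (h : 3 ≤ a ∨ 1 < x) : (sigmabar (a + 1) : ℝ) < sigmabar 1 * (Pbar a).eval x := by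
  have hcubic := cubic_le_eval_Pbar a hx
  by_cases hsmall : a ≤ 6
  · interval_cases a <;>
      norm_num [sigmabar_values, eval_Pbar_one, eval_Pbar_two] at h hcubic ⊢ <;> nlinarith
  have hσ : (sigmabar (a + 1) : ℝ) ≤ (a + 1) * (a + 1 + 1) := by
    exact_mod_cast sigmabar_le (a + 1)
  have ha' : (7 : ℝ) ≤ a := by exact_mod_cast (by omega : 7 ≤ a)
  rw [sigmabar_values.1]
  push_cast
  nlinarith

theorem mul_sub_eval_Pbar_add (a b : ℕ) (x : ℝ) :
    (a + b : ℝ) * ((Pbar a).eval x * (Pbar b).eval x - (Pbar (a + b)).eval x) =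
      x * (∑ k ∈ range a, (sigmabar (k + 1) : ℝ) *
          ((Pbar (a - 1 - k)).eval x * (Pbar b).eval x - (Pbar (a - 1 - k + b)).eval x) +
        ∑ j ∈ range b, ((sigmabar (j + 1) : ℝ) * (Pbar a).eval x - sigmabar (a + j + 1)) *
          (Pbar (b - 1 - j)).eval x) := by
  have hrec_a := natCast_mul_eval_Pbar a x
  have hrec_b := natCast_mul_eval_Pbar b x
  have hrec_ab := natCast_mul_eval_Pbar (a + b) x
  rw [sum_range_add] at hrec_ab
  have hfirst : ∀ k ∈ range a, (sigmabar (k + 1) : ℝ) * (Pbar (a + b - 1 - k)).eval x =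
      sigmabar (k + 1) * (Pbar (a - 1 - k + b)).eval x := fun k hk => by
    rw [show a + b - 1 - k = a - 1 - k + b by have := mem_range.1 hk; omega]
  have hsecond : ∀ j ∈ range b,
      (sigmabar (a + j + 1) : ℝ) * (Pbar (a + b - 1 - (a + j))).eval x =
        sigmabar (a + j + 1) * (Pbar (b - 1 - j)).eval x := fun j _ => by
    rw [show a + b - 1 - (a + j) = b - 1 - j by omega]
  rw [sum_congr rfl hfirst, sum_congr rfl hsecond] at hrec_ab
  simp only [mul_sub, sub_mul, sum_sub_distrib, ← mul_assoc, mul_right_comm _ ((Pbar a).eval x),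
    ← sum_mul]
  push_cast at hrec_ab
  linear_combination (Pbar b).eval x * hrec_a + (Pbar a).eval x * hrec_b - hrec_ab

theorem sigmabar_mul_eval_Pbar_sub_mul_nonneg {a b j : ℕ} (hj : j < b) (hba : b ≤ a) {x : ℝ}
    (hx : 1 ≤ x) :
    0 ≤ ((sigmabar (j + 1) : ℝ) * (Pbar a).eval x - sigmabar (a + j + 1)) *
      (Pbar (b - 1 - j)).eval x :=
  mul_nonneg (sub_nonneg.2 (sigmabar_add_le_mul_eval_Pbar (j := j + 1) (by omega) (by omega) hx))
    (eval_Pbar_nonneg _ (by linarith))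

theorem eval_Pbar_add_le_mul (a b : ℕ) {x : ℝ} (hx : 1 ≤ x) :
    (Pbar (a + b)).eval x ≤ (Pbar a).eval x * (Pbar b).eval x := by
  induction hn : a + b using Nat.strong_induction_on generalizing a b with
  | _ n ih =>
    wlog hba : b ≤ a generalizing a b
    · exact (this b a (by omega) (by omega)).trans_eq (mul_comm _ _)
    subst hn
    rcases Nat.eq_zero_or_pos a with rfl | ha
    · obtain rfl : b = 0 := by omega
      simp [Pbar_zero]
    have hgap := mul_sub_eval_Pbar_add a b x
    have hfirst : ∀ k ∈ range a, 0 ≤ (sigmabar (k + 1) : ℝ) *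
        ((Pbar (a - 1 - k)).eval x * (Pbar b).eval x - (Pbar (a - 1 - k + b)).eval x) :=
      fun k hk => mul_nonneg (by positivity) <| sub_nonneg.2 <|
        ih _ (by have := mem_range.1 hk; omega) _ _ rfl
    refine sub_nonneg.1 (nonneg_of_mul_nonneg_right (hgap ▸ ?_) (by positivity : (0 : ℝ) < a + b))
    exact mul_nonneg (by linarith) (add_nonneg (sum_nonneg hfirst)
      (sum_nonneg fun j hj => sigmabar_mul_eval_Pbar_sub_mul_nonneg (mem_range.1 hj) hba hx))

theorem eval_Pbar_add_lt_mul {a b : ℕ} (hb : 1 ≤ b) (hab : b ≤ a) {x : ℝ} (hx : 1 ≤ x)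
    (h : ¬((a = 1 ∧ b = 1 ∧ x = 1) ∨ (a = 2 ∧ b = 1 ∧ x = 1))) :
    (Pbar (a + b)).eval x < (Pbar a).eval x * (Pbar b).eval x := by
  have hgap := mul_sub_eval_Pbar_add a b x
  have hfirst : ∀ k ∈ range a, 0 ≤ (sigmabar (k + 1) : ℝ) *
      ((Pbar (a - 1 - k)).eval x * (Pbar b).eval x - (Pbar (a - 1 - k + b)).eval x) :=
    fun k _ => mul_nonneg (by positivity) (sub_nonneg.2 (eval_Pbar_add_le_mul _ _ hx))
  have hstrict : ∃ j ∈ range b, 0 < ((sigmabar (j + 1) : ℝ) * (Pbar a).eval x -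
      sigmabar (a + j + 1)) * (Pbar (b - 1 - j)).eval x := by
    by_cases hgen : 3 ≤ a ∨ 1 < x
    · exact ⟨0, mem_range.2 hb, mul_pos
        (sub_pos.2 (sigmabar_add_one_lt_mul_eval_Pbar (by omega) hx hgen))
        (one_pos.trans_le (one_le_eval_Pbar _ hx))⟩
    · obtain ⟨ha3, hx1⟩ := not_or.1 hgen
      obtain rfl : x = 1 := le_antisymm (not_lt.1 hx1) hx
      simp only [and_true] at h
      obtain ⟨rfl, rfl⟩ : a = 2 ∧ b = 2 := by omega
      exact ⟨1, by simp, by norm_num [sigmabar_values, eval_Pbar_two, Pbar_zero]⟩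
  have hsecond_pos := sum_pos'
    (fun j hj => sigmabar_mul_eval_Pbar_sub_mul_nonneg (mem_range.1 hj) hab hx) hstrict
  have hpos := mul_pos (by linarith : (0 : ℝ) < x)
    (add_pos_of_nonneg_of_pos (sum_nonneg hfirst) hsecond_pos)
  rw [← hgap] at hpos
  exact sub_pos.1 (pos_of_mul_pos_right hpos (by positivity))

theorem Pbar_mul_gt (a b : ℕ) (hb : 1 ≤ b) (hab : b ≤ a) (x : ℝ) (hx : 1 ≤ x) :
    (¬((a = 1 ∧ b = 1 ∧ x = 1) ∨ (a = 2 ∧ b = 1 ∧ x = 1)) →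
        (Pbar (a + b)).eval x < (Pbar a).eval x * (Pbar b).eval x) ∧
      (((a = 1 ∧ b = 1 ∧ x = 1) ∨ (a = 2 ∧ b = 1 ∧ x = 1)) →
        (Pbar a).eval x * (Pbar b).eval x = (Pbar (a + b)).eval x) := by
  refine ⟨eval_Pbar_add_lt_mul hb hab hx, ?_⟩
  rintro (⟨rfl, rfl, rfl⟩ | ⟨rfl, rfl, rfl⟩) <;>
    norm_num [eval_Pbar_one, eval_Pbar_two, eval_one_Pbar_three]
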